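/- Let X and Y be compact Hausdorff spaces and f : X → Y a continuous quasi-open map. Let E_X and E_Y be extremally disconnected compact Hausdorff spaces and let p : E_X → X and q : E_Y → Y be continuous surjections that are irreducible and quasi-open. Then there exists a unique continuous map g : E_X → E_Y with q ∘ g = f ∘ p, and this map g is open. -/

import Mathlib

/-!
Gleason projectivity of `EX` lifts `f ∘ p` through `q` to some continuous `g`. Irreducibility of
`q` says that `q⁻¹(interior (q '' A)) ⊆ closure A` for every `A ⊆ EY`; since `q ∘ g = f ∘ p` is
quasi-open, this makes the closure of the `g`-image of every nonempty open set have nonempty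
interior. Two lifts `g, g'` separated at a point are then ruled out by finding one nonempty open
set inside the closures of two disjoint open sets. For openness, the image of a clopen set is
closed and, by the same density, the closure of its interior, which is open in the extremally
disconnected space `EY`; clopen sets form a basis of `EX`.
-/

open Set Function

universe u v w

theorem exists_continuous_comp_eq {E : Type u} {E' : Type v} {Z : Type w}
    [TopologicalSpace E] [CompactSpace E] [T2Space E] [ExtremallyDisconnected E]
    [TopologicalSpace E'] [CompactSpace E'] [T2Space E']
    [TopologicalSpace Z] [CompactSpace Z] [T2Space Z]
    {r : E → Z} (hr : Continuous r) {q : E' → Z} (hq : Continuous q) (hqs : Surjective q) :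
    ∃ g : E → E', Continuous g ∧ q ∘ g = r := by
  -- `CompactT2.Projective` quantifies over spaces in the universe of `E`, so move to a common one
  have : ExtremallyDisconnected (ULift.{max v w} E) :=
    extremallyDisconnected_of_homeo Homeomorph.ulift.symm
  obtain ⟨h, hh, hqh⟩ := CompactT2.ExtremallyDisconnected.projective (A := ULift.{max v w} E)
    (continuous_uliftUp.comp (hr.comp continuous_uliftDown) :
      Continuous (ULift.up.{max u v} ∘ r ∘ ULift.down.{max v w}))
    (continuous_uliftUp.comp (hq.comp continuous_uliftDown) :
      Continuous (ULift.up.{max u v} ∘ q ∘ ULift.down.{max u w}))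
    (ULift.up_surjective.comp (hqs.comp ULift.down_surjective))
  exact ⟨ULift.down ∘ h ∘ ULift.up, continuous_uliftDown.comp (hh.comp continuous_uliftUp),
    funext fun x => congrArg ULift.down (congrFun hqh (ULift.up x))⟩

section QuasiOpen

variable {X Y Z : Type*} [TopologicalSpace X] [TopologicalSpace Y] [TopologicalSpace Z]

def IsQuasiOpenMap (f : X → Y) : Prop :=
  ∀ U : Set X, IsOpen U → U.Nonempty → (interior (f '' U)).Nonempty

theorem IsQuasiOpenMap.comp {g : Y → Z} {f : X → Y} (hg : IsQuasiOpenMap g)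
    (hf : IsQuasiOpenMap f) : IsQuasiOpenMap (g ∘ f) := fun U hU hne => by
  rw [image_comp]
  exact (hg _ isOpen_interior (hf U hU hne)).mono (interior_mono (image_mono interior_subset))

def IsIrreducibleMap (q : X → Y) : Prop :=
  ∀ C : Set X, IsClosed C → q '' C = univ → C = univ

theorem IsIrreducibleMap.preimage_interior_image_subset_closure {q : X → Y}
    (hirr : IsIrreducibleMap q) (hq : Continuous q) (hqs : Surjective q) (A : Set X) :
    q ⁻¹' interior (q '' A) ⊆ closure A := by
  set V := interior (q '' A)
  have hcover : q '' (closure A ∪ (q ⁻¹' V)ᶜ) = univ := by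
    refine eq_univ_of_forall fun y => ?_
    by_cases hy : y ∈ V
    · obtain ⟨a, ha, rfl⟩ := interior_subset hy
      exact ⟨a, .inl (subset_closure ha), rfl⟩
    · obtain ⟨x, rfl⟩ := hqs y
      exact ⟨x, .inr hy, rfl⟩
  have hall := hirr _ (isClosed_closure.union (isOpen_interior.preimage hq).isClosed_compl) hcover
  exact fun x hx => (eq_univ_iff_forall.mp hall x).resolve_right (not_not_intro hx)

theorem IsIrreducibleMap.nonempty_interior_closure_image {q : Y → Z} (hirr : IsIrreducibleMap q)
    (hq : Continuous q) (hqs : Surjective q) {g : X → Y} (hqg : IsQuasiOpenMap (q ∘ g))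
    {U : Set X} (hU : IsOpen U) (hne : U.Nonempty) : (interior (closure (g '' U))).Nonempty := by
  obtain ⟨z, hz⟩ := hqg U hU hne
  obtain ⟨y, rfl⟩ := hqs z
  refine ⟨y, interior_maximal ?_ (isOpen_interior.preimage hq) hz⟩
  rw [image_comp]
  exact hirr.preimage_interior_image_subset_closure hq hqs _

theorem image_subset_closure_interior_closure_image {g : X → Y} (hg : Continuous g)
    (hdense : ∀ U : Set X, IsOpen U → U.Nonempty → (interior (closure (g '' U))).Nonempty)
    {U : Set X} (hU : IsOpen U) : g '' U ⊆ closure (interior (closure (g '' U))) := by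
  rintro _ ⟨x, hx, rfl⟩
  refine mem_closure_iff.mpr fun W hW hxW => ?_
  set A := U ∩ g ⁻¹' W
  obtain ⟨y, hy⟩ := hdense A (hU.inter (hW.preimage hg)) ⟨x, hx, hxW⟩
  have hyW : y ∈ closure W := closure_mono (image_inter_preimage g U W ▸ inter_subset_right)
    (interior_subset hy)
  obtain ⟨w, hwA, hwW⟩ := mem_closure_iff.mp hyW _ isOpen_interior hy
  exact ⟨w, hwW, interior_mono (closure_mono (image_mono inter_subset_left)) hwA⟩

theorem isOpenMap_of_nonempty_interior_closure_image [CompactSpace X] [T2Space X]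
    [TotallyDisconnectedSpace X] [T2Space Y] [ExtremallyDisconnected Y] {g : X → Y}
    (hg : Continuous g)
    (hdense : ∀ U : Set X, IsOpen U → U.Nonempty → (interior (closure (g '' U))).Nonempty) :
    IsOpenMap g := by
  refine isTopologicalBasis_isClopen.isOpenMap_iff.mpr fun K hK => ?_
  have hclosed : IsClosed (g '' K) := (hK.isClosed.isCompact.image hg).isClosed
  have hreg : g '' K = closure (interior (g '' K)) := by
    refine (closure_minimal interior_subset hclosed).antisymm' ?_
    simpa only [hclosed.closure_eq] using
      image_subset_closure_interior_closure_image hg hdense hK.isOpen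
  rw [hreg]
  exact ExtremallyDisconnected.open_closure _ isOpen_interior

theorem IsIrreducibleMap.eq_of_comp_eq [T2Space Y] {q : Y → Z} (hirr : IsIrreducibleMap q)
    (hq : Continuous q) (hqs : Surjective q) {g g' : X → Y} (hg : Continuous g)
    (hg' : Continuous g') (hqg : IsQuasiOpenMap (q ∘ g)) (hcomm : q ∘ g = q ∘ g') : g = g' := by
  funext x
  by_contra hne
  obtain ⟨U, V, hU, hV, hxU, hxV, hUV⟩ := t2_separation hne
  set A := g ⁻¹' U ∩ g' ⁻¹' V
  obtain ⟨z, hz⟩ := hqg A ((hU.preimage hg).inter (hV.preimage hg')) ⟨x, hxU, hxV⟩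
  obtain ⟨y, rfl⟩ := hqs z
  have hOU : q ⁻¹' interior ((q ∘ g) '' A) ⊆ closure U := by
    rw [image_comp]
    exact (hirr.preimage_interior_image_subset_closure hq hqs _).trans
      (closure_mono ((image_mono inter_subset_left).trans (image_preimage_subset g U)))
  have hOV : q ⁻¹' interior ((q ∘ g) '' A) ⊆ closure V := by
    rw [hcomm, image_comp]
    exact (hirr.preimage_interior_image_subset_closure hq hqs _).trans
      (closure_mono ((image_mono inter_subset_right).trans (image_preimage_subset g' V)))
  -- an open set inside `closure V` misses `U`, hence also `closure U`
  have hdisj : Disjoint (q ⁻¹' interior ((q ∘ g) '' A)) (closure U) :=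
    ((hUV.symm.closure_left hU).mono_left hOV).closure_right (isOpen_interior.preimage hq)
  exact hdisj.ne_of_mem hz (hOU hz) rfl

end QuasiOpen

theorem unique_open_absolute_of_quasiOpen_general
    {X Y EX EY : Type*}
    [TopologicalSpace X]
    [TopologicalSpace Y] [CompactSpace Y] [T2Space Y]
    [TopologicalSpace EX] [CompactSpace EX] [T2Space EX] [ExtremallyDisconnected EX]
    [TopologicalSpace EY] [CompactSpace EY] [T2Space EY] [ExtremallyDisconnected EY]
    (f : X → Y) (hf : Continuous f)
    (hfqo : ∀ U : Set X, IsOpen U → U.Nonempty → (interior (f '' U)).Nonempty)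
    (p : EX → X) (hp : Continuous p)
    (hpqo : ∀ U : Set EX, IsOpen U → U.Nonempty → (interior (p '' U)).Nonempty)
    (q : EY → Y) (hq : Continuous q) (hqs : Function.Surjective q)
    (hqirr : ∀ C : Set EY, IsClosed C → q '' C = Set.univ → C = Set.univ) :
    ∃ g : EX → EY, (Continuous g ∧ q ∘ g = f ∘ p ∧ IsOpenMap g) ∧
      ∀ g' : EX → EY, Continuous g' → q ∘ g' = f ∘ p → g' = g := by
  have hirr : IsIrreducibleMap q := hqirr
  obtain ⟨g, hg, hqg⟩ := exists_continuous_comp_eq (hf.comp hp) hq hqs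
  have hqo : IsQuasiOpenMap (q ∘ g) := hqg ▸ IsQuasiOpenMap.comp hfqo hpqo
  have hopen : IsOpenMap g := isOpenMap_of_nonempty_interior_closure_image hg
    fun _ => hirr.nonempty_interior_closure_image hq hqs hqo
  exact ⟨g, ⟨hg, hqg, hopen⟩, fun g' hg' hqg' =>
    (hirr.eq_of_comp_eq hq hqs hg hg' hqo (hqg.trans hqg'.symm)).symm⟩

/-- A continuous quasi-open map between compact Hausdorff spaces has a unique
absolute (lift to the irreducible quasi-open covers by extremally disconnected
spaces), and this lift is open. -/
theorem unique_open_absolute_of_quasiOpen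
    {X Y EX EY : Type*}
    [TopologicalSpace X] [CompactSpace X] [T2Space X]
    [TopologicalSpace Y] [CompactSpace Y] [T2Space Y]
    [TopologicalSpace EX] [CompactSpace EX] [T2Space EX] [ExtremallyDisconnected EX]
    [TopologicalSpace EY] [CompactSpace EY] [T2Space EY] [ExtremallyDisconnected EY]
    (f : X → Y) (hf : Continuous f)
    (hfqo : ∀ U : Set X, IsOpen U → U.Nonempty → (interior (f '' U)).Nonempty)
    (p : EX → X) (hp : Continuous p) (hps : Function.Surjective p)
    (hpirr : ∀ C : Set EX, IsClosed C → p '' C = Set.univ → C = Set.univ)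
    (hpqo : ∀ U : Set EX, IsOpen U → U.Nonempty → (interior (p '' U)).Nonempty)
    (q : EY → Y) (hq : Continuous q) (hqs : Function.Surjective q)
    (hqirr : ∀ C : Set EY, IsClosed C → q '' C = Set.univ → C = Set.univ)
    (hqqo : ∀ U : Set EY, IsOpen U → U.Nonempty → (interior (q '' U)).Nonempty) :
    ∃ g : EX → EY, (Continuous g ∧ q ∘ g = f ∘ p ∧ IsOpenMap g) ∧
      ∀ g' : EX → EY, Continuous g' → q ∘ g' = f ∘ p → g' = g :=
  unique_open_absolute_of_quasiOpen_general f hf hfqo p hp hpqo q hq hqs hqirr
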